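/- arXiv:2011.05408 — 2 statements merged into one kernel-verified Lean document; each statement's English description precedes it below -/
import Mathlib

section
/- Let φ : ℝ → ℝ be differentiable on (0,∞) with 0 < v·φ'(v) ≤ φ(v) for every v > 0, and let u, u*, v, v* > 0. Then φ(v)/φ(v*) - v/v* - (u·φ(v)·v*)/(u*·φ(v*)·v) - u*/u + 2 ≤ 0, with equality when u = u* and v = v*. -/
/-!
Put `A = φ v / φ v*`, `B = v / v*` and `x = u / u*`. The expression equals
`A - B - x A / B - 1 / x + 2 = (A - 1)(A - B) / A + (3 - x A / B - 1 / x - B / A)`.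
The second summand is `≤ 0` by AM–GM, the three terms having product `1`. For the first,
`φ` is increasing and `φ w / w` is decreasing on `(0, ∞)`, so `A` lies between `1` and `B`.
-/

open Set

lemma three_le_add_add_of_mul_mul_eq_one {a b c : ℝ} (ha : 0 < a) (hb : 0 < b) (hc : 0 < c)
    (h : a * b * c = 1) : 3 ≤ a + b + c := by
  nlinarith [sq_nonneg (a - b), sq_nonneg (b - c), sq_nonneg (a - c), mul_pos ha hb,
    mul_pos hb hc, mul_pos ha hc, sq_nonneg (a + b + c - 3)]

lemma sub_sub_mul_div_sub_inv_add_two_nonpos {A B x : ℝ} (hA : 0 < A) (hB : 0 < B) (hx : 0 < x)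
    (hAB : (A - 1) * (A - B) ≤ 0) :
    A - B - x * A / B - 1 / x + 2 ≤ 0 := by
  have hsplit : A - B - x * A / B - 1 / x + 2
      = (A - 1) * (A - B) / A - (x * A / B + 1 / x + B / A - 3) := by
    field_simp
    ring
  have hamgm : 3 ≤ x * A / B + 1 / x + B / A :=
    three_le_add_add_of_mul_mul_eq_one (by positivity) (by positivity) (by positivity)
      (by field_simp)
  rw [hsplit]
  have : (A - 1) * (A - B) / A ≤ 0 := div_nonpos_of_nonpos_of_nonneg hAB hA.le
  linarith

section IncidenceFunction

variable {φ : ℝ → ℝ}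

lemma strictMonoOn_Ioi_of_mul_deriv_pos (h : ∀ w : ℝ, 0 < w → 0 < w * deriv φ w) :
    StrictMonoOn φ (Ioi 0) := by
  have hderiv : ∀ w ∈ Ioi (0 : ℝ), 0 < deriv φ w := fun w hw => pos_of_mul_pos_right (h w hw) hw.le
  refine strictMonoOn_of_deriv_pos (convex_Ioi 0) (fun w hw => ?_) (by simpa using hderiv)
  exact (differentiableAt_of_deriv_ne_zero (hderiv w hw).ne').continuousAt.continuousWithinAt

lemma antitoneOn_Ioi_div_self_of_mul_deriv_le (hdiff : ∀ w ∈ Ioi (0 : ℝ), DifferentiableAt ℝ φ w)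
    (h : ∀ w : ℝ, 0 < w → w * deriv φ w ≤ φ w) :
    AntitoneOn (fun w => φ w / w) (Ioi 0) := by
  have hquot : ∀ w ∈ Ioi (0 : ℝ),
      HasDerivAt (fun w => φ w / w) ((deriv φ w * w - φ w * 1) / w ^ 2) w := fun w hw =>
    (hdiff w hw).hasDerivAt.div (hasDerivAt_id w) hw.ne'
  rw [← interior_Ioi] at hquot
  refine antitoneOn_of_deriv_nonpos (convex_Ioi 0)
    (fun w hw => (hquot w (by simpa using hw)).continuousAt.continuousWithinAt)
    (fun w hw => (hquot w hw).differentiableAt.differentiableWithinAt) (fun w hw => ?_)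
  rw [(hquot w hw).deriv]
  rw [interior_Ioi] at hw
  exact div_nonpos_of_nonpos_of_nonneg (by linarith [h w hw, mul_comm w (deriv φ w)])
    (sq_nonneg w)

lemma ratio_between_one_and_ratio (hmono : MonotoneOn φ (Ioi 0))
    (hanti : AntitoneOn (fun w => φ w / w) (Ioi 0)) {v vstar : ℝ} (hv : 0 < v)
    (hvstar : 0 < vstar) (hφ : 0 < φ vstar) :
    (φ v / φ vstar - 1) * (φ v / φ vstar - v / vstar) ≤ 0 := by
  rcases le_total v vstar with hle | hle
  · have h1 : φ v / φ vstar ≤ 1 := (div_le_one hφ).mpr (hmono hv hvstar hle)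
    have h2 : v / vstar ≤ φ v / φ vstar := by
      have := hanti hv hvstar hle
      simp only at this
      rw [div_le_div_iff₀ hvstar hφ]
      rw [div_le_div_iff₀ hvstar hv] at this
      linarith
    exact mul_nonpos_of_nonpos_of_nonneg (by linarith) (by linarith)
  · have h1 : 1 ≤ φ v / φ vstar := (one_le_div hφ).mpr (hmono hvstar hv hle)
    have h2 : φ v / φ vstar ≤ v / vstar := by
      have := hanti hvstar hv hle
      simp only at this
      rw [div_le_div_iff₀ hφ hvstar]
      rw [div_le_div_iff₀ hv hvstar] at this
      linarith
    exact mul_nonpos_of_nonneg_of_nonpos (by linarith) (by linarith)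

end IncidenceFunction

theorem stmt_17_general (φ : ℝ → ℝ)
    (hinc : ∀ w : ℝ, 0 < w → 0 < w * deriv φ w ∧ w * deriv φ w ≤ φ w)
    (u ustar v vstar : ℝ)
    (hu : 0 < u) (hustar : 0 < ustar) (hv : 0 < v) (hvstar : 0 < vstar) :
    φ v / φ vstar - v / vstar - u * φ v * vstar / (ustar * φ vstar * v) - ustar / u + 2 ≤ 0 ∧
    (u = ustar → v = vstar →
      φ v / φ vstar - v / vstar - u * φ v * vstar / (ustar * φ vstar * v) - ustar / u + 2
        = 0) := by
  have hpos : ∀ w : ℝ, 0 < w → 0 < φ w := fun w hw => (hinc w hw).1.trans_le (hinc w hw).2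
  have hdiff : ∀ w ∈ Ioi (0 : ℝ), DifferentiableAt ℝ φ w := fun w hw =>
    differentiableAt_of_deriv_ne_zero (pos_of_mul_pos_right (hinc w hw).1 hw.le).ne'
  have hmono := (strictMonoOn_Ioi_of_mul_deriv_pos fun w hw => (hinc w hw).1).monotoneOn
  have hanti := antitoneOn_Ioi_div_self_of_mul_deriv_le hdiff fun w hw => (hinc w hw).2
  have hφv := hpos v hv
  have hφvstar := hpos vstar hvstar
  have hnormalize : φ v / φ vstar - v / vstar - u * φ v * vstar / (ustar * φ vstar * v) - ustar / u + 2
      = φ v / φ vstar - v / vstar - u / ustar * (φ v / φ vstar) / (v / vstar) - 1 / (u / ustar)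
        + 2 := by
    field_simp
  refine ⟨?_, fun hu' hv' => ?_⟩
  · rw [hnormalize]
    exact sub_sub_mul_div_sub_inv_add_two_nonpos (div_pos hφv hφvstar) (div_pos hv hvstar)
      (div_pos hu hustar) (ratio_between_one_and_ratio hmono hanti hv hvstar hφvstar)
  · subst hu' hv'
    field_simp
    ring

/-- If `φ` is differentiable on `(0,∞)` with `0 < v φ'(v) ≤ φ v` for all `v > 0`, then for
all `u, u*, v, v* > 0` the Lyapunov integrand satisfies
`φ(v)/φ(v*) - v/v* - (u φ(v) v*)/(u* φ(v*) v) - u*/u + 2 ≤ 0`,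
with equality when `u = u*` and `v = v*`. -/
theorem stmt_17 (φ : ℝ → ℝ)
    (hdiff : ∀ w ∈ Set.Ioi (0:ℝ), DifferentiableAt ℝ φ w)
    (hinc : ∀ w : ℝ, 0 < w → 0 < w * deriv φ w ∧ w * deriv φ w ≤ φ w)
    (u ustar v vstar : ℝ)
    (hu : 0 < u) (hustar : 0 < ustar) (hv : 0 < v) (hvstar : 0 < vstar) :
    φ v / φ vstar - v / vstar - u * φ v * vstar / (ustar * φ vstar * v) - ustar / u + 2 ≤ 0 ∧
    (u = ustar → v = vstar →
      φ v / φ vstar - v / vstar - u * φ v * vstar / (ustar * φ vstar * v) - ustar / u + 2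
        = 0) :=
  stmt_17_general φ hinc u ustar v vstar hu hustar hv hvstar
end

section
/- Let φ : ℝ → ℝ be differentiable on [0,∞) with φ(0) = 0 and 0 < v·φ'(v) ≤ φ(v) for every v > 0, and let θ > 0 satisfy φ'(0) ≤ (μ + σ)/(λ(θΛ/μ + Λ/σ)). Then for all u ≥ 0 and v > 0: λ(θΛ/μ + Λ/σ)·u·φ(v) ≤ (μ + σ)·u·v. Consequently, for all u ≥ 0, v > 0, λ(θΛ/μ + Λ/σ)uφ(v) - (σ + μ)uv - μθ(u - Λ/μ)² - σv² ≤ 0. -/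
/-!
The condition `v φ'(v) ≤ φ(v)` says exactly that the slope `φ(v)/v` of the chord from the origin
has nonpositive derivative, so it is antitone on `(0, ∞)`. Its limit at `0⁺` is `φ'(0)`, hence
`φ(v) ≤ φ'(0) v`, and the hypothesis on `φ'(0)` turns this into the first inequality. The second
one follows by subtracting the nonnegative terms `μθ(u - Λ/μ)²` and `σv²`.
-/

open Set Filter Topology

theorem antitoneOn_div_self_of_mul_deriv_le {φ : ℝ → ℝ}
    (hdiff : ∀ v, 0 < v → DifferentiableAt ℝ φ v) (hle : ∀ v, 0 < v → v * deriv φ v ≤ φ v) :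
    AntitoneOn (fun v => φ v / v) (Ioi 0) := by
  have hdiv : ∀ v ∈ Ioi (0 : ℝ), DifferentiableAt ℝ (fun v => φ v / v) v := fun v hv =>
    (hdiff v hv).div differentiableAt_id hv.ne'
  apply antitoneOn_of_deriv_nonpos (convex_Ioi 0)
    (fun v hv => (hdiv v hv).continuousAt.continuousWithinAt)
  · rw [interior_Ioi]
    exact fun v hv => (hdiv v hv).differentiableWithinAt
  · rw [interior_Ioi]
    intro v hv
    have hderiv : HasDerivAt (fun v => φ v / v) ((deriv φ v * v - φ v * 1) / v ^ 2) v :=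
      (hdiff v hv).hasDerivAt.div (hasDerivAt_id' v) hv.ne'
    rw [hderiv.deriv]
    exact div_nonpos_of_nonpos_of_nonneg (by linarith [hle v hv]) (sq_nonneg v)

theorem le_mul_of_hasDerivWithinAt_of_antitoneOn {φ : ℝ → ℝ} {d : ℝ}
    (hd : HasDerivWithinAt φ d (Ioi 0) 0) (h0 : φ 0 = 0)
    (hanti : AntitoneOn (fun v => φ v / v) (Ioi 0)) {v : ℝ} (hv : 0 < v) :
    φ v ≤ d * v := by
  have hslope : Tendsto (fun v => φ v / v) (𝓝[>] 0) (𝓝 d) := by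
    simpa [slope_fun_def_field, h0] using
      (hasDerivWithinAt_iff_tendsto_slope' self_notMem_Ioi).mp hd
  have hle : φ v / v ≤ d := by
    refine ge_of_tendsto hslope ?_
    filter_upwards [Ioc_mem_nhdsGT hv] with w hw
    exact hanti hw.1 hv hw.2
  rwa [div_le_iff₀ hv] at hle

/-- If `φ` is differentiable on `[0,∞)` with `φ 0 = 0` and `0 < vφ'(v) ≤ φ v` for `v > 0`,
and `θ > 0` satisfies `φ'(0) ≤ (μ + σ)/(λ(θΛ/μ + Λ/σ))`, then for all `u ≥ 0` and `v > 0`: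
`λ(θΛ/μ + Λ/σ) u φ(v) ≤ (μ + σ) u v`, and consequently
`λ(θΛ/μ + Λ/σ) u φ(v) - (σ + μ) u v - μθ(u - Λ/μ)² - σv² ≤ 0`. -/
theorem stmt_19 (φ : ℝ → ℝ) (Λ μ σ lam θ : ℝ)
    (hΛ : 0 < Λ) (hμ : 0 < μ) (hσ : 0 < σ) (hlam : 0 < lam) (hθ : 0 < θ)
    (hdiff : ∀ v ∈ Set.Ici (0:ℝ), DifferentiableAt ℝ φ v)
    (hφ0 : φ 0 = 0)
    (hinc : ∀ v : ℝ, 0 < v → 0 < v * deriv φ v ∧ v * deriv φ v ≤ φ v)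
    (hcond : deriv φ 0 ≤ (μ + σ) / (lam * (θ * Λ / μ + Λ / σ))) :
    ∀ u v : ℝ, 0 ≤ u → 0 < v →
      lam * (θ * Λ / μ + Λ / σ) * u * φ v ≤ (μ + σ) * u * v ∧
      lam * (θ * Λ / μ + Λ / σ) * u * φ v - (σ + μ) * (u * v)
        - μ * θ * (u - Λ / μ) ^ 2 - σ * v ^ 2 ≤ 0 := by
  intro u v hu hv
  set c := lam * (θ * Λ / μ + Λ / σ)
  have hc : 0 < c := by positivity
  have hanti : AntitoneOn (fun v => φ v / v) (Ioi 0) :=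
    antitoneOn_div_self_of_mul_deriv_le (fun v hv => hdiff v hv.le) (fun v hv => (hinc v hv).2)
  have hφv : φ v ≤ deriv φ 0 * v :=
    le_mul_of_hasDerivWithinAt_of_antitoneOn
      (hdiff 0 self_mem_Ici).hasDerivAt.hasDerivWithinAt hφ0 hanti hv
  have hcd : deriv φ 0 * c ≤ μ + σ := (le_div_iff₀ hc).mp hcond
  have hfirst : c * u * φ v ≤ (μ + σ) * u * v :=
    calc c * u * φ v ≤ c * u * (deriv φ 0 * v) := by gcongr
      _ = deriv φ 0 * c * (u * v) := by ring
      _ ≤ (μ + σ) * (u * v) := by gcongr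
      _ = (μ + σ) * u * v := by ring
  refine ⟨hfirst, ?_⟩
  nlinarith [mul_nonneg (mul_nonneg hμ.le hθ.le) (sq_nonneg (u - Λ / μ)),
    mul_nonneg hσ.le (sq_nonneg v)]
end
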